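/- Let G be a connected simple graph with girth g. If g is odd, then every cycle of G of length g is a fundamental cycle of a BFS tree rooted at some vertex of G. -/

import Mathlib

open SimpleGraph

/-- `T` is a breadth-first-search (distance-preserving) spanning tree of `G` rooted at `x`. -/
def IsBFSTree {V : Type*} (G T : SimpleGraph V) (x : V) : Prop :=
  T ≤ G ∧ T.IsTree ∧ ∀ v : V, T.dist x v = G.dist x v

/-- `c` is the fundamental cycle of the non-tree edge `e` with respect to `T`. -/
def IsFundCycle {V : Type*} (G T : SimpleGraph V) {a : V} (c : G.Walk a a)
    (e : Sym2 V) : Prop :=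
  c.IsCycle ∧ e ∈ G.edgeSet ∧ e ∉ T.edgeSet ∧ e ∈ c.edges ∧
    ∀ f ∈ c.edges, f = e ∨ f ∈ T.edgeSet

/-!
Write the cycle as `a = c₀, c₁, …, c_{2k+1} = a`. Two distinct paths with common ends contain
a cycle, so their lengths add up to at least the girth; hence the arcs of a shortest cycle of
length at most half the girth are geodesics, and `d(a, cⱼ) = min(j, g - j)`. Every vertex
`cⱼ ≠ a` can therefore take as its BFS parent its cycle-neighbour nearer to `a`; completing this
by any neighbour one step closer to `a` at the other vertices gives a BFS tree rooted at `a` that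
contains every edge of `c` except the middle edge `c_k c_{k+1}`, whose ends are both at
distance `k`.
-/

namespace SimpleGraph

variable {V : Type*} {G : SimpleGraph V}

theorem Walk.IsPath.girth_le_length_add_length {u v : V} {p q : G.Walk u v}
    (hp : p.IsPath) (hq : q.IsPath) (hpq : p ≠ q) : G.girth ≤ p.length + q.length := by
  set H : SimpleGraph V := fromEdgeSet {e | e ∈ p.edges ++ q.edges}
  have hHG : H ≤ G := (fromEdgeSet_le G).2 fun e he => by
    obtain hmem | hmem := List.mem_append.1 he.1
    exacts [p.edges_subset_edgeSet hmem, q.edges_subset_edgeSet hmem]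
  have hpH : ∀ e ∈ p.edges, e ∈ H.edgeSet := fun e he => by
    simp [H, he, G.not_isDiag_of_mem_edgeSet (p.edges_subset_edgeSet he)]
  have hqH : ∀ e ∈ q.edges, e ∈ H.edgeSet := fun e he => by
    simp [H, he, G.not_isDiag_of_mem_edgeSet (q.edges_subset_edgeSet he)]
  have hH : ¬ H.IsAcyclic := fun hH => hpq <| Walk.ext_support <| by
    have := congrArg (fun r : H.Path u v => r.1.support)
      ((hH.subsingleton_path u v).elim ⟨_, hp.transfer hpH⟩ ⟨_, hq.transfer hqH⟩)
    simpa only [Walk.support_transfer] using this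
  obtain ⟨x, w, hw⟩ : ∃ x, ∃ w : H.Walk x x, w.IsCycle := by simpa [IsAcyclic] using hH
  calc G.girth ≤ (w.mapLe hHG).length := girth_le_length (hw.mapLe hHG)
    _ = w.edges.length := by simp
    _ ≤ (p.edges ++ q.edges).length :=
      (hw.edges_nodup.subperm fun e he => by
        have := w.edges_subset_edgeSet he
        rw [edgeSet_fromEdgeSet] at this
        exact this.1).length_le
    _ = p.length + q.length := by simp

theorem Walk.IsCycle.dist_getVert_of_length_eq_girth {u : V} {c : G.Walk u u} (hc : c.IsCycle)
    (hlen : c.length = G.girth) {i : ℕ} (hi : 2 * i ≤ c.length) :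
    G.dist u (c.getVert i) = i := by
  have hic : i < c.length := by have := hc.three_le_length; omega
  have hA : (c.take i).length = i := by simp [Walk.take_length]; omega
  refine le_antisymm ((dist_le (c.take i)).trans hA.le) (not_lt.1 fun hlt => ?_)
  obtain ⟨P, hP, hPlen⟩ := (c.take i).reachable.exists_path_of_dist
  have hne : P ≠ c.take i := fun h => by rw [h, hA] at hPlen; omega
  have := hP.girth_le_length_add_length (hc.isPath_take hic) hne
  omega

theorem Walk.IsCycle.dist_getVert_eq_min {u : V} {c : G.Walk u u} (hc : c.IsCycle)
    (hlen : c.length = G.girth) {j : ℕ} (hj : j ≤ c.length) :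
    G.dist u (c.getVert j) = min j (c.length - j) := by
  rcases le_total (2 * j) c.length with h | h
  · rw [hc.dist_getVert_of_length_eq_girth hlen h, min_eq_left (by omega)]
  · have := hc.reverse.dist_getVert_of_length_eq_girth (i := c.length - j) (by simpa using hlen)
      (by simp; omega)
    rw [Walk.getVert_reverse, Nat.sub_sub_self hj] at this
    rw [this, min_eq_right (by omega)]

theorem Connected.exists_adj_dist_add_one (hG : G.Connected) {a v : V} (hv : v ≠ a) :
    ∃ u, G.Adj v u ∧ G.dist a u + 1 = G.dist a v := by
  obtain ⟨p, hp⟩ := hG.exists_walk_length_eq_dist v a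
  cases p with
  | nil => exact absurd rfl hv
  | @cons _ u _ hvu q =>
    refine ⟨u, hvu, ?_⟩
    have hqu : G.dist a u ≤ q.length := by simpa using dist_le q.reverse
    have hstep := hvu.diff_dist_adj (u := a)
    rw [dist_comm, Walk.length_cons] at hp
    have := hG.pos_dist_of_ne hv.symm
    omega

variable {a : V} {par : V → V}

def IsParentMap (G : SimpleGraph V) (a : V) (par : V → V) : Prop :=
  ∀ v ≠ a, G.Adj v (par v) ∧ G.dist a (par v) + 1 = G.dist a v

def parentGraph (a : V) (par : V → V) : SimpleGraph V :=
  fromRel fun u v => v ≠ a ∧ u = par v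

theorem parentGraph_adj {u v : V} :
    (parentGraph a par).Adj u v ↔ u ≠ v ∧ (v ≠ a ∧ u = par v ∨ u ≠ a ∧ v = par u) :=
  fromRel_adj ..

theorem exists_isParentMap_extending (hG : G.Connected) (a : V) (f : V → V) :
    ∃ par, IsParentMap G a par ∧
      ∀ v, G.Adj v (f v) → G.dist a (f v) + 1 = G.dist a v → par v = f v := by
  classical
  choose! closer hcloser using fun v (hv : v ≠ a) => hG.exists_adj_dist_add_one hv
  refine ⟨fun v => if G.Adj v (f v) ∧ G.dist a (f v) + 1 = G.dist a v then f v else closer v,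
    fun v hv => ?_, fun v hadj hdist => if_pos ⟨hadj, hdist⟩⟩
  dsimp only
  split_ifs with h
  exacts [h, hcloser v hv]

namespace IsParentMap

theorem parentGraph_le (h : IsParentMap G a par) : parentGraph a par ≤ G := by
  intro u v huv
  obtain ⟨-, ⟨hv, rfl⟩ | ⟨hu, rfl⟩⟩ := parentGraph_adj.1 huv
  exacts [(h v hv).1.symm, (h u hu).1]

theorem dist_add_one_of_parentGraph_adj (h : IsParentMap G a par) {u v : V}
    (huv : (parentGraph a par).Adj u v) :
    G.dist a u + 1 = G.dist a v ∨ G.dist a v + 1 = G.dist a u := by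
  obtain ⟨-, ⟨hv, rfl⟩ | ⟨hu, rfl⟩⟩ := parentGraph_adj.1 huv
  exacts [.inl (h v hv).2, .inr (h u hu).2]

theorem exists_walk_length_eq_dist (h : IsParentMap G a par) :
    ∀ n v, G.dist a v = n → ∃ w : (parentGraph a par).Walk a v, w.length = n
  | 0, v, hv => by
    obtain rfl : v = a := by_contra fun hva => by have := (h v hva).2; omega
    exact ⟨.nil, rfl⟩
  | n + 1, v, hv => by
    have hva : v ≠ a := by rintro rfl; simp at hv
    obtain ⟨w, hw⟩ := exists_walk_length_eq_dist h n (par v) (by have := (h v hva).2; omega)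
    have hadj : (parentGraph a par).Adj (par v) v :=
      parentGraph_adj.2 ⟨(h v hva).1.ne.symm, .inl ⟨hva, rfl⟩⟩
    exact ⟨w.concat hadj, by simp [hw]⟩

theorem isAcyclic (h : IsParentMap G a par) : (parentGraph a par).IsAcyclic := by
  classical
  intro x w hw
  obtain ⟨m, hm, hmax⟩ := w.support.toFinset.exists_max_image (G.dist a) ⟨x, by simp⟩
  rw [List.mem_toFinset] at hm
  -- a neighbour of the farthest vertex `m` of the cycle cannot be its child, so is its parent
  have hpar : ∀ u ∈ w.support, (parentGraph a par).Adj m u → u = par m := by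
    intro u hu hmu
    obtain ⟨-, ⟨hu', rfl⟩ | ⟨-, rfl⟩⟩ := parentGraph_adj.1 hmu
    · have := (h u hu').2
      have := hmax u (List.mem_toFinset.2 hu)
      omega
    · rfl
  have hw' := hw.rotate hm
  refine hw'.snd_ne_penultimate ((hpar _ ?_ (Walk.adj_snd hw'.not_nil)).trans
    (hpar _ ?_ (Walk.adj_penultimate hw'.not_nil).symm).symm)
  all_goals exact (w.mem_support_rotate_iff m hm).1 (Walk.getVert_mem_support _ _)

theorem isBFSTree (h : IsParentMap G a par) : IsBFSTree G (parentGraph a par) a := by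
  have hwalk (v : V) := h.exists_walk_length_eq_dist _ v rfl
  have hreach (v : V) : (parentGraph a par).Reachable a v := (hwalk v).elim fun w _ => ⟨w⟩
  refine ⟨h.parentGraph_le,
    ⟨(connected_iff_exists_forall_reachable _).2 ⟨a, hreach⟩, h.isAcyclic⟩,
    fun v => le_antisymm ?_ ((hreach v).dist_anti h.parentGraph_le)⟩
  obtain ⟨w, hw⟩ := hwalk v
  exact hw ▸ dist_le w

end IsParentMap

namespace Walk

variable {c : G.Walk a a} {k : ℕ}

noncomputable def towardStart (c : G.Walk a a) (k : ℕ) : V → V :=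
  Function.extend (fun j : Set.Iio c.length => c.getVert j)
    (fun j => c.getVert (if (j : ℕ) ≤ k then j - 1 else j + 1)) id

theorem IsCycle.towardStart_getVert (hc : c.IsCycle) {j : ℕ} (hj : j < c.length) :
    c.towardStart k (c.getVert j) = c.getVert (if j ≤ k then j - 1 else j + 1) := by
  have hinj : Function.Injective fun j : Set.Iio c.length => c.getVert j :=
    fun i j hij => Subtype.ext <| hc.getVert_injOn' (by simpa using Nat.le_sub_one_of_lt i.2)
      (by simpa using Nat.le_sub_one_of_lt j.2) hij
  exact hinj.extend_apply _ _ (⟨j, hj⟩ : Set.Iio c.length)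

theorem IsCycle.parent_getVert_eq (hc : c.IsCycle) (hlen : c.length = G.girth)
    (hk : c.length = 2 * k + 1)
    (hpar : ∀ v, G.Adj v (c.towardStart k v) →
      G.dist a (c.towardStart k v) + 1 = G.dist a v → par v = c.towardStart k v)
    {j : ℕ} (hj₀ : 1 ≤ j) (hj : j < c.length) :
    par (c.getVert j) = c.getVert (if j ≤ k then j - 1 else j + 1) := by
  rw [← hc.towardStart_getVert hj]
  refine hpar _ ?_ ?_ <;> rw [hc.towardStart_getVert hj]
  · split_ifs
    · simpa [Nat.sub_add_cancel hj₀] using (c.adj_getVert_succ (i := j - 1) (by omega)).symm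
    · exact c.adj_getVert_succ hj
  · split_ifs <;>
      rw [hc.dist_getVert_eq_min hlen (by omega), hc.dist_getVert_eq_min hlen (by omega)] <;> omega

theorem IsCycle.mk_getVert_mem_edgeSet_parentGraph (hc : c.IsCycle) (hk : c.length = 2 * k + 1)
    (hpar : ∀ j, 1 ≤ j → j < c.length →
      par (c.getVert j) = c.getVert (if j ≤ k then j - 1 else j + 1))
    {i : ℕ} (hi : i < c.length) (hik : i ≠ k) :
    s(c.getVert i, c.getVert (i + 1)) ∈ (parentGraph a par).edgeSet := by
  refine parentGraph_adj.2 ⟨(c.adj_getVert_succ hi).ne, ?_⟩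
  rcases Nat.lt_or_gt_of_ne hik with hik | hik
  · refine .inl ⟨fun h => ?_, by
      rw [hpar (i + 1) (by omega) (by omega), if_pos (by omega), Nat.add_sub_cancel]⟩
    have := (hc.getVert_endpoint_iff (i := i + 1) (by omega)).1 h
    omega
  · refine .inr ⟨fun h => ?_, by rw [hpar i (by omega) hi, if_neg (by omega)]⟩
    have := (hc.getVert_endpoint_iff hi.le).1 h
    omega

end Walk

end SimpleGraph

open SimpleGraph

theorem girth_cycle_is_fundamental_of_odd_girth_general
    {V : Type*} (G : SimpleGraph V) (hG : G.Connected)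
    (hodd : Odd G.girth)
    {a : V} (c : G.Walk a a) (hc : c.IsCycle) (hlen : c.length = G.girth) :
    ∃ (x : V) (T : SimpleGraph V), IsBFSTree G T x ∧
      ∃ e : Sym2 V, IsFundCycle G T c e := by
  obtain ⟨k, hk⟩ : ∃ k, c.length = 2 * k + 1 := hlen ▸ hodd
  obtain ⟨par, hpar, hparc⟩ := exists_isParentMap_extending hG a (c.towardStart k)
  refine ⟨a, parentGraph a par, hpar.isBFSTree, s(c.getVert k, c.getVert (k + 1)), hc,
    c.adj_getVert_succ (by omega), fun he => ?_, c.mk_mem_edges_iff_exists.2 ⟨k, by omega, rfl⟩,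
    fun e he => ?_⟩
  · have := hpar.dist_add_one_of_parentGraph_adj he
    rw [hc.dist_getVert_eq_min hlen (by omega), hc.dist_getVert_eq_min hlen (by omega)] at this
    omega
  · obtain ⟨i, hi, rfl⟩ := List.mem_iff_getElem.1 he
    rw [Walk.length_edges] at hi
    rw [Walk.getElem_edges]
    obtain rfl | hik := eq_or_ne i k
    · exact .inl rfl
    · exact .inr (hc.mk_getVert_mem_edgeSet_parentGraph hk
        (fun _ => hc.parent_getVert_eq hlen hk hparc) hi hik)

/-- In a connected graph of odd girth, every cycle of girth length is a fundamental cycle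
of a BFS tree rooted at some vertex of `G`. -/
theorem girth_cycle_is_fundamental_of_odd_girth
    {V : Type*} [Fintype V] (G : SimpleGraph V) (hG : G.Connected)
    (hodd : Odd G.girth)
    {a : V} (c : G.Walk a a) (hc : c.IsCycle) (hlen : c.length = G.girth) :
    ∃ (x : V) (T : SimpleGraph V), IsBFSTree G T x ∧
      ∃ e : Sym2 V, IsFundCycle G T c e :=
  girth_cycle_is_fundamental_of_odd_girth_general G hG hodd c hc hlen
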